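/- Policy iteration convergence (Theorem 5.3, explicit finite-horizon form): consider a finite MDP with discount factor γ ∈ [0, 1/3), and a sequence of deterministic policies π_0, π_1, …, π_K such that for each k < K there is Q̂^{π_k} : S × A → ℝ with ‖Q̂^{π_k} − Q^{π_k}‖∞ ≤ ε and π_{k+1}(s) maximizes Q̂^{π_k}(s, ·) for every state s. Then ‖V* − V^{π_K}‖∞ ≤ (2γ/(1 − γ))^K ‖V* − V^{π_0}‖∞ + 2ε/(1 − 3γ). -/

import Mathlib

/-!
With `D k = ‖V* - V^{π_k}‖`, split `V* - V^{π_{k+1}}` pointwise as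
`(T V* - T V^{π_k}) + (T V^{π_k} - Q^{π_k}(·, π_{k+1}))`
`  + (Q^{π_k}(·, π_{k+1}) - T_{π_{k+1}} V^{π_{k+1}})`.
The outer terms are controlled by the `γ`-Lipschitz continuity of `V ↦ Q_V` in sup norm,
giving `γ D k` and `γ ‖V^{π_k} - V^{π_{k+1}}‖ ≤ γ (D k + D (k+1))`, and the middle one lies
in `[0, 2ε]` because `π_{k+1}` is greedy for an `ε`-approximation of `Q^{π_k}`. Hence
`D (k+1) ≤ (2γ/(1-γ)) D k + 2ε/(1-γ)`, an affine recurrence that contracts for `γ < 1/3`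
and whose fixed point is `2ε/(1-3γ)`.
-/

/-- The policy Bellman operator `(T_π V)(s) = r(s,π(s)) + γ ∑_{s'} P(s'|s,π(s)) V(s')`. -/
noncomputable def bellmanPol {S A : Type*} [Fintype S] (P : S → A → S → ℝ)
    (r : S → A → ℝ) (γ : ℝ) (π : S → A) (V : S → ℝ) : S → ℝ :=
  fun s => r s (π s) + γ * ∑ s', P s (π s) s' * V s'

/-- The optimal Bellman operator
`(T V)(s) = max_{a∈A} [ r(s,a) + γ ∑_{s'} P(s'|s,a) V(s') ]`. -/
noncomputable def bellmanOpt {S A : Type*} [Fintype S] [Fintype A] [Nonempty A]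
    (P : S → A → S → ℝ) (r : S → A → ℝ) (γ : ℝ) (V : S → ℝ) : S → ℝ :=
  fun s => Finset.univ.sup' Finset.univ_nonempty
    (fun a => r s a + γ * ∑ s', P s a s' * V s')

/-- The action-value function `Q(s,a) = r(s,a) + γ ∑_{s'} P(s'|s,a) V(s')`. -/
noncomputable def qFun {S A : Type*} [Fintype S] (P : S → A → S → ℝ)
    (r : S → A → ℝ) (γ : ℝ) (V : S → ℝ) (s : S) (a : A) : ℝ :=
  r s a + γ * ∑ s', P s a s' * V s'

open Finset

theorem Finset.sup'_le_sup'_add {ι α : Type*} [AddCommGroup α] [LinearOrder α]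
    [IsOrderedAddMonoid α] {s : Finset ι} (hs : s.Nonempty) {f g : ι → α} {δ : α}
    (h : ∀ i ∈ s, f i ≤ g i + δ) : s.sup' hs f ≤ s.sup' hs g + δ :=
  sup'_le hs f fun i hi => (h i hi).trans (add_le_add (le_sup' g hi) le_rfl)

theorem Finset.abs_sup'_sub_sup'_le {ι α : Type*} [AddCommGroup α] [LinearOrder α]
    [IsOrderedAddMonoid α] {s : Finset ι} (hs : s.Nonempty) {f g : ι → α} {δ : α}
    (h : ∀ i ∈ s, |f i - g i| ≤ δ) : |s.sup' hs f - s.sup' hs g| ≤ δ := by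
  rw [abs_sub_le_iff, sub_le_iff_le_add', sub_le_iff_le_add']
  exact ⟨sup'_le_sup'_add hs fun i hi => sub_le_iff_le_add'.1 (abs_sub_le_iff.1 (h i hi)).1,
    sup'_le_sup'_add hs fun i hi => sub_le_iff_le_add'.1 (abs_sub_le_iff.1 (h i hi)).2⟩

theorem abs_sum_mul_le_norm {S : Type*} [Fintype S] {p : S → ℝ} (hp0 : ∀ s, 0 ≤ p s)
    (hp1 : ∑ s, p s = 1) (f : S → ℝ) : |∑ s, p s * f s| ≤ ‖f‖ :=
  calc |∑ s, p s * f s| ≤ ∑ s, p s * ‖f‖ :=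
        (abs_sum_le_sum_abs _ _).trans <| sum_le_sum fun s _ => by
          rw [abs_mul, abs_of_nonneg (hp0 s)]
          exact mul_le_mul_of_nonneg_left (norm_le_pi_norm f s) (hp0 s)
    _ = ‖f‖ := by rw [← sum_mul, hp1, one_mul]

theorem le_pow_mul_add_div_one_sub_of_le_mul_add {D : ℕ → ℝ} {ρ c : ℝ} {K : ℕ}
    (hρ0 : 0 ≤ ρ) (hρ1 : ρ < 1) (hc : 0 ≤ c) (h : ∀ k < K, D (k + 1) ≤ ρ * D k + c) :
    D K ≤ ρ ^ K * D 0 + c / (1 - ρ) := by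
  have hfix : ρ * (c / (1 - ρ)) + c = c / (1 - ρ) := by
    field_simp [(sub_pos.2 hρ1).ne']
    ring
  suffices ∀ n ≤ K, D n ≤ ρ ^ n * D 0 + c / (1 - ρ) from this K le_rfl
  intro n hn
  induction n with
  | zero => simpa using div_nonneg hc (sub_nonneg.2 hρ1.le)
  | succ n ih =>
    calc D (n + 1) ≤ ρ * D n + c := h n hn
      _ ≤ ρ * (ρ ^ n * D 0 + c / (1 - ρ)) + c := by gcongr; exact ih (by omega)
      _ = ρ ^ (n + 1) * D 0 + c / (1 - ρ) := by rw [pow_succ]; linear_combination hfix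

section MDP

variable {S A : Type*} [Fintype S] (P : S → A → S → ℝ) (r : S → A → ℝ) (γ : ℝ)

theorem bellmanPol_apply (π : S → A) (V : S → ℝ) (s : S) :
    bellmanPol P r γ π V s = qFun P r γ V s (π s) :=
  rfl

theorem qFun_sub_qFun (V W : S → ℝ) (s : S) (a : A) :
    qFun P r γ V s a - qFun P r γ W s a = γ * ∑ s', P s a s' * (V - W) s' := by
  simp only [qFun, Pi.sub_apply, mul_sub, sum_sub_distrib]
  ring

variable {P γ}

theorem abs_qFun_sub_qFun_le (hP0 : ∀ s a s', 0 ≤ P s a s')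
    (hP1 : ∀ s a, ∑ s', P s a s' = 1) (hγ0 : 0 ≤ γ) (V W : S → ℝ) (s : S) (a : A) :
    |qFun P r γ V s a - qFun P r γ W s a| ≤ γ * ‖V - W‖ := by
  rw [qFun_sub_qFun, abs_mul, abs_of_nonneg hγ0]
  exact mul_le_mul_of_nonneg_left (abs_sum_mul_le_norm (hP0 s a) (hP1 s a) _) hγ0

variable [Fintype A] [Nonempty A]

theorem qFun_le_bellmanOpt (V : S → ℝ) (s : S) (a : A) :
    qFun P r γ V s a ≤ bellmanOpt P r γ V s :=
  le_sup' (qFun P r γ V s) (mem_univ a)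

theorem abs_bellmanOpt_sub_bellmanOpt_le (hP0 : ∀ s a s', 0 ≤ P s a s')
    (hP1 : ∀ s a, ∑ s', P s a s' = 1) (hγ0 : 0 ≤ γ) (V W : S → ℝ) (s : S) :
    |bellmanOpt P r γ V s - bellmanOpt P r γ W s| ≤ γ * ‖V - W‖ :=
  abs_sup'_sub_sup'_le _ fun a _ => abs_qFun_sub_qFun_le r hP0 hP1 hγ0 V W s a

theorem bellmanOpt_le_qFun_add_of_approx_greedy {V : S → ℝ} {s : S} {Qh : A → ℝ} {a₀ : A}
    {ε : ℝ} (hQ : ∀ a, |Qh a - qFun P r γ V s a| ≤ ε)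
    (hgreedy : Qh a₀ = univ.sup' univ_nonempty Qh) :
    bellmanOpt P r γ V s ≤ qFun P r γ V s a₀ + 2 * ε :=
  calc bellmanOpt P r γ V s ≤ univ.sup' univ_nonempty Qh + ε :=
        sup'_le_sup'_add _ fun a _ => sub_le_iff_le_add'.1 (abs_sub_le_iff.1 (hQ a)).2
    _ = Qh a₀ + ε := by rw [hgreedy]
    _ ≤ qFun P r γ V s a₀ + 2 * ε := by linarith [abs_le.1 (hQ a₀)]

theorem abs_sub_le_of_approx_greedy (hP0 : ∀ s a s', 0 ≤ P s a s')
    (hP1 : ∀ s a, ∑ s', P s a s' = 1) (hγ0 : 0 ≤ γ) {Vstar V V' : S → ℝ} {π' : S → A}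
    {Qh : S → A → ℝ} {ε : ℝ} (hVstar : ∀ s, Vstar s = bellmanOpt P r γ Vstar s)
    (hV' : ∀ s, V' s = bellmanPol P r γ π' V' s)
    (hQ : ∀ s a, |Qh s a - qFun P r γ V s a| ≤ ε)
    (hgreedy : ∀ s, Qh s (π' s) = univ.sup' univ_nonempty (Qh s)) (s : S) :
    |Vstar s - V' s| ≤ γ * ‖Vstar - V‖ + 2 * ε + γ * ‖V - V'‖ := by
  have hopt := abs_le.1 (abs_bellmanOpt_sub_bellmanOpt_le r hP0 hP1 hγ0 Vstar V s)
  have hlow : qFun P r γ V s (π' s) ≤ bellmanOpt P r γ V s :=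
    qFun_le_bellmanOpt r V s (π' s)
  have hhigh := bellmanOpt_le_qFun_add_of_approx_greedy r (hQ s) (hgreedy s)
  have hq := abs_le.1 (abs_qFun_sub_qFun_le r hP0 hP1 hγ0 V V' s (π' s))
  have hVs := hVstar s
  have hV's := hV' s
  rw [bellmanPol_apply] at hV's
  rw [abs_le]
  constructor <;> linarith

theorem norm_sub_le_of_approx_greedy (hP0 : ∀ s a s', 0 ≤ P s a s')
    (hP1 : ∀ s a, ∑ s', P s a s' = 1) (hγ0 : 0 ≤ γ) {Vstar V V' : S → ℝ} {π' : S → A}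
    {Qh : S → A → ℝ} {ε : ℝ} (hVstar : ∀ s, Vstar s = bellmanOpt P r γ Vstar s)
    (hV' : ∀ s, V' s = bellmanPol P r γ π' V' s)
    (hQ : ∀ s a, |Qh s a - qFun P r γ V s a| ≤ ε)
    (hgreedy : ∀ s, Qh s (π' s) = univ.sup' univ_nonempty (Qh s))
    (hγ1 : γ < 1) (hε : 0 ≤ ε) :
    ‖Vstar - V'‖ ≤ 2 * γ / (1 - γ) * ‖Vstar - V‖ + 2 * ε / (1 - γ) := by
  have hpt : ‖Vstar - V'‖ ≤ γ * ‖Vstar - V‖ + 2 * ε + γ * ‖V - V'‖ :=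
    (pi_norm_le_iff_of_nonneg (by positivity)).2 fun s =>
      abs_sub_le_of_approx_greedy r hP0 hP1 hγ0 hVstar hV' hQ hgreedy s
  have htri : ‖V - V'‖ ≤ ‖Vstar - V‖ + ‖Vstar - V'‖ := by
    rw [norm_sub_rev Vstar V]
    exact norm_sub_le_norm_sub_add_norm_sub V Vstar V'
  rw [div_mul_eq_mul_div, ← add_div, le_div_iff₀ (sub_pos.2 hγ1)]
  linarith [mul_le_mul_of_nonneg_left htri hγ0]

end MDP

theorem policy_iteration_convergence_general
    {S A : Type*} [Fintype S] [Fintype A] [Nonempty A]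
    (P : S → A → S → ℝ)
    (hP0 : ∀ s a s', 0 ≤ P s a s')
    (hP1 : ∀ s a, ∑ s', P s a s' = 1)
    (r : S → A → ℝ) (γ : ℝ) (hγ0 : 0 ≤ γ) (hγ : γ < 1 / 3)
    (ε : ℝ) (hε : 0 ≤ ε) (K : ℕ)
    (π : ℕ → S → A) (Vpi : ℕ → S → ℝ) (Vstar : S → ℝ)
    (hVpi : ∀ k s, Vpi k s = bellmanPol P r γ (π k) (Vpi k) s)
    (hVstar : ∀ s, Vstar s = bellmanOpt P r γ Vstar s)
    (himp : ∀ k < K, ∃ Qh : S → A → ℝ,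
      ‖(fun p : S × A => Qh p.1 p.2) -
        (fun p : S × A => qFun P r γ (Vpi k) p.1 p.2)‖ ≤ ε ∧
      ∀ s, Qh s (π (k + 1) s) = Finset.univ.sup' Finset.univ_nonempty (fun a => Qh s a)) :
    ‖Vstar - Vpi K‖ ≤ (2 * γ / (1 - γ)) ^ K * ‖Vstar - Vpi 0‖ + 2 * ε / (1 - 3 * γ) := by
  have hγ1 : 0 < 1 - γ := by linarith
  have hstep : ∀ k < K, ‖Vstar - Vpi (k + 1)‖ ≤
      2 * γ / (1 - γ) * ‖Vstar - Vpi k‖ + 2 * ε / (1 - γ) := by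
    intro k hk
    obtain ⟨Qh, hQh, hgreedy⟩ := himp k hk
    exact norm_sub_le_of_approx_greedy r hP0 hP1 hγ0 hVstar (hVpi (k + 1))
      (fun s a => (norm_le_pi_norm _ (s, a)).trans hQh) hgreedy (by linarith) hε
  have hfix : 2 * ε / (1 - γ) / (1 - 2 * γ / (1 - γ)) = 2 * ε / (1 - 3 * γ) := by
    field_simp [hγ1.ne', (by linarith : (1 - 3 * γ) ≠ 0)]
    ring
  rw [← hfix]
  exact le_pow_mul_add_div_one_sub_of_le_mul_add (D := fun k => ‖Vstar - Vpi k‖)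
    (div_nonneg (by linarith) hγ1.le) ((div_lt_one hγ1).2 (by linarith))
    (div_nonneg (by linarith) hγ1.le) hstep

/-- Policy iteration convergence (explicit finite-horizon form): for `γ ∈ [0,1/3)` and
approximate greedy updates with error `ε`,
`‖V* − V^{π_K}‖∞ ≤ (2γ/(1 − γ))^K ‖V* − V^{π_0}‖∞ + 2ε/(1 − 3γ)`. -/
theorem policy_iteration_convergence
    {S A : Type*} [Fintype S] [Nonempty S] [Fintype A] [Nonempty A]
    (P : S → A → S → ℝ)
    (hP0 : ∀ s a s', 0 ≤ P s a s')
    (hP1 : ∀ s a, ∑ s', P s a s' = 1)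
    (r : S → A → ℝ) (γ : ℝ) (hγ0 : 0 ≤ γ) (hγ : γ < 1 / 3)
    (ε : ℝ) (hε : 0 ≤ ε) (K : ℕ)
    (π : ℕ → S → A) (Vpi : ℕ → S → ℝ) (Vstar : S → ℝ)
    (hVpi : ∀ k s, Vpi k s = bellmanPol P r γ (π k) (Vpi k) s)
    (hVstar : ∀ s, Vstar s = bellmanOpt P r γ Vstar s)
    (himp : ∀ k < K, ∃ Qh : S → A → ℝ,
      ‖(fun p : S × A => Qh p.1 p.2) -
        (fun p : S × A => qFun P r γ (Vpi k) p.1 p.2)‖ ≤ ε ∧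
      ∀ s, Qh s (π (k + 1) s) = Finset.univ.sup' Finset.univ_nonempty (fun a => Qh s a)) :
    ‖Vstar - Vpi K‖ ≤ (2 * γ / (1 - γ)) ^ K * ‖Vstar - Vpi 0‖ + 2 * ε / (1 - 3 * γ) :=
  policy_iteration_convergence_general P hP0 hP1 r γ hγ0 hγ ε hε K π Vpi Vstar hVpi hVstar himp
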